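/- Consider the multi-agent system ẋ_i(t) = sat(Σ_{j∈N_i}(x_j(t) − x_i(t))) with sat the linear saturation function with lower bound τ_l = 0, on a connected acyclic graph G. Then every state converges to the maximum of the initial states: for every agent i, x_i(t) → max_j x_j(0) as t → ∞. (Remark 2, x* = x_max(0).) -/

import Mathlib

open Filter

/-- The linear saturation function with lower bound `τ_l = 0`,
upper bound `τh > 0` and saturation level `r > 0`. -/
noncomputable def sat (τh r s : ℝ) : ℝ :=
  if s ≤ 0 then 0 else if s < r then τh / r * s else τh

/-!
The saturation is monotone, vanishes on `s ≤ 0` and is positive on `s > 0`. Hence an agent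
holding the current maximum has zero velocity, so the maximum `M` of the initial states is never
exceeded, while every agent is nondecreasing; each `x i` therefore converges to some `L i ≤ M`.
If the neighbour sum of the limits were positive at some vertex, that agent would eventually grow
at a linear rate, which is impossible; so `L` is superharmonic on a finite connected graph, hence
constant, and it equals `M` at a vertex where the initial maximum is attained.
-/

open Topology Set Finset

theorem sat_of_nonpos {τh r s : ℝ} (hs : s ≤ 0) : sat τh r s = 0 := if_pos hs

theorem sat_pos {τh r s : ℝ} (hτh : 0 < τh) (hs : 0 < s) : 0 < sat τh r s := by
  unfold sat
  rw [if_neg hs.not_ge]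
  split_ifs with hsr
  · exact mul_pos (div_pos hτh (hs.trans hsr)) hs
  · exact hτh

theorem sat_monotone {τh r : ℝ} (hτh : 0 < τh) : Monotone (sat τh r) := by
  intro s t hst
  rcases le_or_gt s 0 with hs | hs
  · rw [sat_of_nonpos hs]
    rcases le_or_gt t 0 with ht | ht
    · rw [sat_of_nonpos ht]
    · exact (sat_pos hτh ht).le
  · unfold sat
    rw [if_neg hs.not_ge, if_neg (hs.trans_le hst).not_ge]
    split_ifs with hsr htr htr
    · exact mul_le_mul_of_nonneg_left hst (div_nonneg hτh.le (hs.trans hsr).le)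
    · rw [div_mul_eq_mul_div, div_le_iff₀ (hs.trans hsr)]
      exact mul_le_mul_of_nonneg_left hsr.le hτh.le
    · exact absurd (htr.trans_le' hst) hsr
    · exact le_rfl

theorem HasDerivAt.eventually_lt_add_mul {f : ℝ → ℝ} {d ρ t : ℝ} (hf : HasDerivAt f d t)
    (hρ : d < ρ) : ∀ᶠ z in 𝓝[>] t, f z < f t + ρ * (z - t) := by
  have hslope := (hasDerivAt_iff_tendsto_slope.1 hf).eventually_lt_const hρ
  filter_upwards [nhdsWithin_mono t (fun z hz => ne_of_gt hz) hslope, self_mem_nhdsWithin]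
    with z hz hzt
  rw [slope_def_field, div_lt_iff₀ (sub_pos.2 hzt)] at hz
  linarith

theorem monotoneOn_Ici_of_hasDerivAt_nonneg {f f' : ℝ → ℝ} {a : ℝ}
    (hf : ∀ t, a ≤ t → HasDerivAt f (f' t) t) (hf' : ∀ t, a ≤ t → 0 ≤ f' t) :
    MonotoneOn f (Ici a) := by
  exact monotoneOn_of_hasDerivWithinAt_nonneg (convex_Ici a)
    (fun t ht => (hf t ht).continuousAt.continuousWithinAt)
    (fun t ht => (hf t (interior_subset ht)).hasDerivWithinAt)
    (fun t ht => hf' t (interior_subset ht))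

theorem MonotoneOn.exists_tendsto_atTop {f : ℝ → ℝ} {a M : ℝ} (hf : MonotoneOn f (Ici a))
    (hM : ∀ t, a ≤ t → f t ≤ M) : ∃ L, Tendsto f atTop (𝓝 L) := by
  have hmono : Monotone fun t => f (max t a) := fun s t hst =>
    hf (le_max_right s a) (le_max_right t a) (max_le_max_right a hst)
  have hbdd : BddAbove (range fun t => f (max t a)) := ⟨M, by
    rintro _ ⟨t, rfl⟩
    exact hM _ (le_max_right t a)⟩
  refine ⟨_, (tendsto_atTop_ciSup hmono hbdd).congr' ?_⟩
  filter_upwards [eventually_ge_atTop a] with t ht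
  rw [max_eq_left ht]

theorem tendsto_atTop_of_hasDerivAt_ge {f f' : ℝ → ℝ} {c : ℝ} (hc : 0 < c)
    (h : ∀ᶠ t in atTop, HasDerivAt f (f' t) t ∧ c ≤ f' t) : Tendsto f atTop atTop := by
  obtain ⟨T, hT⟩ := eventually_atTop.1 h
  have hmono : MonotoneOn (fun t => f t - c * t) (Ici T) :=
    monotoneOn_Ici_of_hasDerivAt_nonneg
      (fun t ht => (hT t ht).1.sub ((hasDerivAt_id t).const_mul c))
      (fun t ht => by simpa using (hT t ht).2)
  have hlin : Tendsto (fun t => f T + c * (t - T)) atTop atTop :=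
    tendsto_atTop_add_const_left _ _
      ((tendsto_atTop_add_const_right _ _ tendsto_id).const_mul_atTop hc)
  refine tendsto_atTop_mono' _ ?_ hlin
  filter_upwards [eventually_ge_atTop T] with t ht
  have := hmono self_mem_Ici ht ht
  linarith

theorem apply_le_iSup_apply_zero {ι : Type*} [Fintype ι] [Nonempty ι]
    {x x' : ℝ → ι → ℝ} (hx : ∀ i t, 0 ≤ t → HasDerivAt (fun s => x s i) (x' t i) t)
    (hmax : ∀ i t, 0 ≤ t → (∀ j, x t j ≤ x t i) → x' t i ≤ 0) {t : ℝ} (ht : 0 ≤ t)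
    (i : ι) : x t i ≤ ⨆ j, x 0 j := by
  set F : ℝ → ℝ := fun s => univ.sup' univ_nonempty (x s ·)
  have hle_F : ∀ s j, x s j ≤ F s := fun s j => le_sup' (x s ·) (mem_univ j)
  -- The upper envelope `F` has nonpositive upper right Dini derivative.
  have hslope : ∀ s, 0 ≤ s → ∀ ρ > 0, ∀ᶠ z in 𝓝[>] s, F z < F s + ρ * (z - s) := by
    intro s hs ρ hρ
    have hall : ∀ᶠ z in 𝓝[>] s, ∀ j, x z j < F s + ρ * (z - s) := by
      refine eventually_all.2 fun j => ?_
      rcases (hle_F s j).eq_or_lt with hmax_j | hlt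
      · rw [← hmax_j]
        have hj_max : ∀ k, x s k ≤ x s j := fun k => hmax_j ▸ hle_F s k
        exact (hx j s hs).eventually_lt_add_mul ((hmax j s hs hj_max).trans_lt hρ)
      · filter_upwards [nhdsWithin_le_nhds ((hx j s hs).continuousAt.eventually_lt_const hlt),
          self_mem_nhdsWithin] with z hz (hzs : s < z)
        nlinarith
    filter_upwards [hall] with z hz
    exact (sup'_lt_iff _).2 fun j _ => hz j
  have hF : F t ≤ F 0 := by
    have hF_cont : ContinuousOn F (Icc 0 t) := ContinuousOn.finset_sup'_apply _
      fun j _ s hs => (hx j s hs.1).continuousAt.continuousWithinAt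
    refine image_le_of_liminf_slope_right_le_deriv_boundary (B := fun _ => F 0)
      (B' := fun _ => 0) hF_cont le_rfl continuousOn_const
      (fun s _ => hasDerivWithinAt_const s _ _) ?_ ⟨ht, le_rfl⟩
    intro s hs ρ hρ
    refine ((hslope s hs.1 ρ hρ).and self_mem_nhdsWithin).frequently.mono ?_
    rintro z ⟨hz, hzs : s < z⟩
    rw [slope_def_field, div_lt_iff₀ (sub_pos.2 hzs)]
    linarith
  calc x t i ≤ F t := hle_F t i
    _ ≤ F 0 := hF
    _ = ⨆ j, x 0 j := sup'_univ_eq_ciSup _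

theorem SimpleGraph.Connected.apply_eq_of_sum_sub_nonpos {V : Type*} [Fintype V]
    {G : SimpleGraph V} [DecidableRel G.Adj] (hG : G.Connected) {w : V → ℝ}
    (hw : ∀ i, ∑ j ∈ G.neighborFinset i, (w j - w i) ≤ 0) (u v : V) : w u = w v := by
  have := hG.nonempty
  obtain ⟨a, ha⟩ := Finite.exists_min w
  have hadj : ∀ b c, G.Adj b c → w b = w a → w c = w a := by
    intro b c hbc hb
    have hterms : ∀ j ∈ G.neighborFinset b, 0 ≤ w j - w b := fun j _ => by linarith [ha j]
    have := (sum_eq_zero_iff_of_nonneg hterms).1 (le_antisymm (hw b) (sum_nonneg hterms)) c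
      ((G.mem_neighborFinset b c).2 hbc)
    linarith
  have hmin : ∀ v, w v = w a := by
    intro v
    induction (G.reachable_iff_reflTransGen a v).1 (hG a v) with
    | refl => rfl
    | tail _ hbc ih => exact hadj _ _ hbc ih
  rw [hmin u, hmin v]

theorem tendsto_iSup_of_hasDerivAt_sum_neighbor_sub {V : Type*} [Fintype V]
    {G : SimpleGraph V} [DecidableRel G.Adj] (hG : G.Connected) {φ : ℝ → ℝ}
    (hφ : Monotone φ) (hφ_nonpos : ∀ s ≤ 0, φ s = 0) (hφ_pos : ∀ s, 0 < s → 0 < φ s)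
    {x : ℝ → V → ℝ}
    (hx : ∀ i t, 0 ≤ t →
      HasDerivAt (fun s => x s i) (φ (∑ j ∈ G.neighborFinset i, (x t j - x t i))) t)
    (i : V) : Tendsto (fun t => x t i) atTop (𝓝 (⨆ j, x 0 j)) := by
  have := hG.nonempty
  set M := ⨆ j, x 0 j
  have hφ_nonneg : ∀ s, 0 ≤ φ s := fun s =>
    (le_or_gt s 0).elim (fun hs => (hφ_nonpos s hs).ge) (fun hs => (hφ_pos s hs).le)
  have hle_M : ∀ i t, 0 ≤ t → x t i ≤ M := fun i t ht =>
    apply_le_iSup_apply_zero hx (fun j t _ hj => (hφ_nonpos _ (sum_nonpos fun k _ =>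
      sub_nonpos.2 (hj k))).le) ht i
  have hmono : ∀ i, MonotoneOn (fun t => x t i) (Ici 0) := fun i =>
    monotoneOn_Ici_of_hasDerivAt_nonneg (hx i) fun t _ => hφ_nonneg _
  choose L hL using fun i => (hmono i).exists_tendsto_atTop (hle_M i)
  have hx0_le_L : ∀ i, x 0 i ≤ L i := fun i => ge_of_tendsto (hL i) <| by
    filter_upwards [eventually_ge_atTop 0] with t ht using hmono i self_mem_Ici ht ht
  have hL_le_M : ∀ i, L i ≤ M := fun i => le_of_tendsto (hL i) <| by
    filter_upwards [eventually_ge_atTop 0] with t ht using hle_M i t ht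
  have hL_superharmonic : ∀ i, ∑ j ∈ G.neighborFinset i, (L j - L i) ≤ 0 := by
    intro i
    by_contra! hS
    have hsum : Tendsto (fun t => ∑ j ∈ G.neighborFinset i, (x t j - x t i)) atTop
        (𝓝 (∑ j ∈ G.neighborFinset i, (L j - L i))) :=
      tendsto_finsetSum _ fun j _ => (hL j).sub (hL i)
    refine not_tendsto_atTop_of_tendsto_nhds (hL i) (tendsto_atTop_of_hasDerivAt_ge
      (f' := fun t => φ (∑ j ∈ G.neighborFinset i, (x t j - x t i)))
      (hφ_pos _ (half_pos hS)) ?_)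
    filter_upwards [eventually_ge_atTop 0,
      hsum.eventually (eventually_ge_nhds (half_lt_self hS))] with t ht hlarge
    exact ⟨hx i t ht, hφ hlarge⟩
  obtain ⟨i₀, hi₀⟩ := exists_eq_ciSup_of_finite (f := fun j => x 0 j)
  have hLi₀ : L i₀ = M := le_antisymm (hL_le_M i₀) (hi₀.symm.trans_le (hx0_le_L i₀))
  rw [← hLi₀, hG.apply_eq_of_sum_sub_nonpos hL_superharmonic i₀ i]
  exact hL i

theorem saturated_consensus_converges_to_max_general (N : ℕ) (G : SimpleGraph (Fin N))
    [DecidableRel G.Adj] (hconn : G.Connected)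
    (τh r : ℝ) (hτh : 0 < τh)
    (x : ℝ → Fin N → ℝ)
    (hODE : ∀ i : Fin N, ∀ t : ℝ, 0 ≤ t →
      HasDerivAt (fun s => x s i)
        (sat τh r (∑ j ∈ G.neighborFinset i, (x t j - x t i))) t) :
    ∀ i : Fin N, Tendsto (fun t => x t i) atTop (nhds (⨆ j : Fin N, x 0 j)) :=
  tendsto_iSup_of_hasDerivAt_sum_neighbor_sub hconn (sat_monotone hτh)
    (fun _ => sat_of_nonpos) (fun _ => sat_pos hτh) hODE

/-- Remark 2: for the multi-agent system `ẋ_i = sat(Σ_{j∈N_i}(x_j − x_i))` on a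
connected acyclic (tree) graph with the non-negative saturation (`τ_l = 0`),
every state converges to the maximum of the initial states. -/
theorem saturated_consensus_converges_to_max (N : ℕ) (G : SimpleGraph (Fin N))
    [DecidableRel G.Adj] (hconn : G.Connected) (hacyc : G.IsAcyclic)
    (τh r : ℝ) (hτh : 0 < τh) (hr : 0 < r)
    (x : ℝ → Fin N → ℝ)
    (hx : ∀ i : Fin N, Differentiable ℝ (fun t => x t i))
    (hODE : ∀ i : Fin N, ∀ t : ℝ, 0 ≤ t →
      HasDerivAt (fun s => x s i)
        (sat τh r (∑ j ∈ G.neighborFinset i, (x t j - x t i))) t) :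
    ∀ i : Fin N, Tendsto (fun t => x t i) atTop (nhds (⨆ j : Fin N, x 0 j)) :=
  saturated_consensus_converges_to_max_general N G hconn τh r hτh x hODE
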